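/- arXiv:math/9807184 — 6 statements merged into one kernel-verified Lean document; each statement's English description precedes it below -/
import Mathlib

section
/- For every nonempty subset A ⊆ N one has u^A = Σ_{B : B ⊆ N, A ∩ B ≠ ∅} v_B, where the sum ranges over all subsets B of N meeting A. -/
/-!
After swapping the two sums, the coefficient of `u C` is a signed count of the sets `B ⊇ Cᶜ`
meeting `A`. These are the Boolean interval `[Cᶜ, univ]` minus the interval `[Cᶜ, Aᶜ]`, and
`∑_{s ⊆ B ⊆ t} (-1)^|B|` vanishes unless `s = t`; so the coefficient is `[C = A] - [C = ∅]`,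
and the convention `u ∅ = 0` removes the second term.
-/

open Finset

section

variable {α R : Type*} [DecidableEq α] [Ring R]

theorem Finset.sum_powerset_neg_one_pow_card' (s : Finset α) :
    ∑ t ∈ s.powerset, (-1 : R) ^ #t = if s = ∅ then 1 else 0 := by
  have := congrArg (Int.cast : ℤ → R) (sum_powerset_neg_one_pow_card (x := s))
  push_cast at this
  simpa [apply_ite (Int.cast : ℤ → R)] using this

theorem Finset.sum_Icc_neg_one_pow_card (s t : Finset α) :
    ∑ u ∈ Icc s t, (-1 : R) ^ #u = if s = t then (-1) ^ #s else 0 := by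
  by_cases hst : s ⊆ t
  · have hdisj : ∀ x ∈ (t \ s).powerset, Disjoint s x := fun x hx =>
      disjoint_of_subset_right (mem_powerset.1 hx) disjoint_sdiff
    have hinj : Set.InjOn (s ∪ ·) (t \ s).powerset := fun x hx y hy hxy => by
      simpa [union_sdiff_cancel_left (hdisj x hx), union_sdiff_cancel_left (hdisj y hy)]
        using congrArg (· \ s) hxy
    rw [Icc_eq_image_powerset hst, sum_image hinj]
    calc ∑ x ∈ (t \ s).powerset, (-1 : R) ^ #(s ∪ x)
        = (-1) ^ #s * ∑ x ∈ (t \ s).powerset, (-1 : R) ^ #x := by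
          rw [mul_sum]
          exact sum_congr rfl fun x hx => by rw [card_union_of_disjoint (hdisj x hx), pow_add]
      _ = if s = t then (-1) ^ #s else 0 := by
          simp only [sum_powerset_neg_one_pow_card', sdiff_eq_empty_iff_subset,
            subset_antisymm_iff (a := s), hst, true_and, mul_ite, mul_one, mul_zero]
  · rw [Icc_eq_empty hst, sum_empty, if_neg (fun h => hst h.le)]

variable [Fintype α]

theorem Finset.sum_compl_subset_inter_nonempty_neg_one_pow (A C : Finset α) :
    ∑ B with Cᶜ ⊆ B ∧ (A ∩ B).Nonempty, (-1 : R) ^ (#B + #C + Fintype.card α + 1)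
      = (if C = A then 1 else 0) - if C = ∅ then 1 else 0 := by
  have hsplit := sum_filter_add_sum_filter_not {B | Cᶜ ⊆ B} (fun B => (A ∩ B).Nonempty)
    (fun B => (-1 : R) ^ #B)
  have hmiss : ({B | Cᶜ ⊆ B ∧ ¬(A ∩ B).Nonempty} : Finset (Finset α)) = Icc Cᶜ Aᶜ := by
    ext B
    simp [not_nonempty_iff_eq_empty, ← disjoint_iff_inter_eq_empty,
      subset_compl_iff_disjoint_left]
  have hall : ({B | Cᶜ ⊆ B} : Finset (Finset α)) = Icc Cᶜ univ := by ext B; simp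
  rw [filter_filter, filter_filter, hmiss, hall, ← eq_sub_iff_add_eq] at hsplit
  simp only [sum_Icc_neg_one_pow_card, compl_eq_univ_iff, compl_inj_iff] at hsplit
  have hsign : (-1 : R) ^ #Cᶜ * (-1) ^ (#C + Fintype.card α + 1) = -1 := by
    rw [← pow_add, ← add_assoc, ← add_assoc, card_compl_add_card, ← two_mul, pow_succ,
      pow_mul, neg_one_sq, one_pow, one_mul]
  calc _ = (∑ B with Cᶜ ⊆ B ∧ (A ∩ B).Nonempty, (-1 : R) ^ #B)
        * (-1) ^ (#C + Fintype.card α + 1) := by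
        simp only [sum_mul, ← pow_add, add_assoc]
    _ = _ := by
        rw [hsplit]
        split_ifs <;> simp [hsign]

theorem Finset.sum_inter_nonempty_sum_compl_subset (u : Finset α → R) (A : Finset α) :
    ∑ B with (A ∩ B).Nonempty, ∑ C with Bᶜ ⊆ C, (-1 : R) ^ (#B + #C + Fintype.card α + 1) * u C
      = u A - u ∅ := by
  calc _ = ∑ C, (∑ B with Cᶜ ⊆ B ∧ (A ∩ B).Nonempty,
          (-1 : R) ^ (#B + #C + Fintype.card α + 1)) * u C := by
        simp only [sum_mul]
        refine sum_comm' fun B C => ?_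
        simp only [mem_filter, mem_univ, true_and, and_comm]
        exact and_congr_right' (compl_le_iff_compl_le (x := B) (y := C))
    _ = u A - u ∅ := by
        simp [sum_compl_subset_inter_nonempty_neg_one_pow, sub_mul, sum_sub_distrib]

end

theorem u_eq_sum_v_general (n : ℕ)
    (u v : Finset (Fin n) → ℝ) (hu0 : u ∅ = 0)
    (hv : ∀ A : Finset (Fin n), A.Nonempty →
      v A = ∑ B ∈ Finset.univ.powerset.filter
          (fun B => Finset.univ \ A ⊆ B ∧ B ≠ ∅),
        (-1 : ℝ) ^ (A.card + B.card + n + 1) * u B)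
    (A : Finset (Fin n)) :
    u A = ∑ B ∈ Finset.univ.powerset.filter (fun B => (A ∩ B).Nonempty), v B := by
  have hv' : ∀ B ∈ univ.powerset.filter (fun B => (A ∩ B).Nonempty), v B =
      ∑ C with Bᶜ ⊆ C, (-1 : ℝ) ^ (#B + #C + Fintype.card (Fin n) + 1) * u C := by
    intro B hB
    rw [hv B ((mem_filter.1 hB).2.mono inter_subset_right), ← compl_eq_univ_sdiff,
      Fintype.card_fin, powerset_univ, ← filter_filter, sum_filter_of_ne]
    rintro C - hC rfl
    simp [hu0] at hC
  rw [sum_congr rfl hv', powerset_univ, sum_inter_nonempty_sum_compl_subset, hu0, sub_zero]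

/-- Lemma 4.1(a): with `v_A = Σ_{N∖A ⊆ B ⊆ N, B ≠ ∅} (−1)^{|A|+|B|+n+1} u^B`, one has
`u^A = Σ_{B ⊆ N, A ∩ B ≠ ∅} v_B` for every nonempty `A ⊆ N`. -/
theorem u_eq_sum_v (n : ℕ) (hn : 1 ≤ n)
    (u v : Finset (Fin n) → ℝ) (hu0 : u ∅ = 0)
    (hv : ∀ A : Finset (Fin n), A.Nonempty →
      v A = ∑ B ∈ Finset.univ.powerset.filter
          (fun B => Finset.univ \ A ⊆ B ∧ B ≠ ∅),
        (-1 : ℝ) ^ (A.card + B.card + n + 1) * u B)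
    (A : Finset (Fin n)) (hA : A.Nonempty) :
    u A = ∑ B ∈ Finset.univ.powerset.filter (fun B => (A ∩ B).Nonempty), v B :=
  u_eq_sum_v_general n u v hu0 hv A
end

section
/- For every nonempty subset A ⊆ N one has Σ_{B : N∖A ⊆ B ⊆ N, B ≠ ∅} (−1)^{|A|+|B|+n+1} (u^B)² = 2 u^N v_A − Σ_{(B,C) : B ∪ C = A, B ≠ ∅, C ≠ ∅} v_B v_C, where the last sum ranges over all ordered pairs (B, C) of nonempty subsets of A whose union is A. -/
open Finset

namespace SumSqAux

variable {α : Type*} [DecidableEq α]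

lemma powerset_alt (A : Finset α) :
    (∑ T ∈ A.powerset, (-1:ℝ)^T.card) = if A = ∅ then 1 else 0 := by
  have h := Finset.sum_powerset_neg_one_pow_card (x := A)
  calc (∑ T ∈ A.powerset, (-1:ℝ)^T.card)
      = ((∑ T ∈ A.powerset, (-1:ℤ)^T.card : ℤ) : ℝ) := by push_cast; rfl
    _ = _ := by rw [h]; split <;> norm_num

lemma mobius_inv (f : Finset α → ℝ) (A : Finset α) :
    ∑ T ∈ A.powerset, (-1:ℝ)^(A.card + T.card) * (∑ S ∈ T.powerset, f S) = f A := by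
  have h1 : ∑ T ∈ A.powerset, (-1:ℝ)^(A.card + T.card) * (∑ S ∈ T.powerset, f S)
      = ∑ T ∈ A.powerset, ∑ S ∈ (A \ T).powerset, (-1:ℝ)^T.card * f S := by
    refine Finset.sum_nbij' (fun T => A \ T) (fun T => A \ T) ?_ ?_ ?_ ?_ ?_
    · intro T hT; simp only [mem_powerset] at *; exact sdiff_subset
    · intro T hT; simp only [mem_powerset] at *; exact sdiff_subset
    · intro T hT; simp only [mem_powerset] at hT; exact Finset.sdiff_sdiff_eq_self hT
    · intro T hT; simp only [mem_powerset] at hT; exact Finset.sdiff_sdiff_eq_self hT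
    · intro T hT
      simp only [mem_powerset] at hT
      rw [Finset.sdiff_sdiff_eq_self hT, Finset.mul_sum]
      refine Finset.sum_congr rfl fun S _ => ?_
      congr 1
      have hc : (A \ T).card + T.card = A.card := card_sdiff_add_card_eq_card hT
      rw [show A.card + T.card = (A \ T).card + 2 * T.card by omega]
      rw [pow_add, pow_mul, neg_one_sq, one_pow, mul_one]
  rw [h1]
  have h2 : ∑ T ∈ A.powerset, ∑ S ∈ (A \ T).powerset, (-1:ℝ)^T.card * f S
      = ∑ S ∈ A.powerset, ∑ T ∈ (A \ S).powerset, (-1:ℝ)^T.card * f S := by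
    refine Finset.sum_comm' ?_
    intro T S
    simp only [mem_powerset, subset_sdiff]
    constructor
    · rintro ⟨h1, h2, h3⟩; exact ⟨⟨h1, h3.symm⟩, h2⟩
    · rintro ⟨⟨h1, h3⟩, h2⟩; exact ⟨h1, h2, h3.symm⟩
  rw [h2]
  have h3 : ∀ S ∈ A.powerset,
      ∑ T ∈ (A \ S).powerset, (-1:ℝ)^T.card * f S
      = (if S = A then 1 else 0) * f S := by
    intro S hS
    rw [← Finset.sum_mul, powerset_alt]
    simp only [mem_powerset] at hS
    have he : A \ S = ∅ ↔ S = A := by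
      rw [sdiff_eq_empty_iff_subset]
      exact ⟨fun h => subset_antisymm hS h, fun h => le_of_eq h.symm⟩
    simp only [he]
  rw [Finset.sum_congr rfl h3]
  simp only [ite_mul, one_mul, zero_mul]
  rw [Finset.sum_ite_eq' A.powerset A f]
  simp

lemma union_fiber (φ : Finset α → Finset α → ℝ) (A : Finset α) :
    ∑ A' ∈ A.powerset, (∑ p ∈ (A'.powerset ×ˢ A'.powerset).filter
        (fun p => p.1 ∪ p.2 = A'), φ p.1 p.2)
    = ∑ p ∈ A.powerset ×ˢ A.powerset, φ p.1 p.2 := by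
  have hset : ∀ A' ∈ A.powerset,
      (A'.powerset ×ˢ A'.powerset).filter (fun p => p.1 ∪ p.2 = A')
      = (A.powerset ×ˢ A.powerset).filter (fun p => p.1 ∪ p.2 = A') := by
    intro A' hA'
    simp only [mem_powerset] at hA'
    ext ⟨B, C⟩
    simp only [mem_filter, mem_product, mem_powerset]
    constructor
    · rintro ⟨⟨h1, h2⟩, h3⟩; exact ⟨⟨h1.trans hA', h2.trans hA'⟩, h3⟩
    · rintro ⟨⟨h1, h2⟩, h3⟩
      exact ⟨⟨h3 ▸ subset_union_left, h3 ▸ subset_union_right⟩, h3⟩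
  rw [Finset.sum_congr rfl (fun A' hA' => by rw [hset A' hA'])]
  exact Finset.sum_fiberwise_of_maps_to
    (fun p hp => by
      simp only [mem_product, mem_powerset] at hp
      exact mem_powerset.2 (union_subset hp.1 hp.2)) _

lemma keyA (n : ℕ) (q : Finset (Fin n) → ℝ) (hq : q ∅ = 0) (A : Finset (Fin n)) :
    ∑ B ∈ Finset.univ.powerset.filter (fun B => Finset.univ \ A ⊆ B ∧ B ≠ ∅),
      (-1:ℝ)^(A.card + B.card + n + 1) * q B
    = (-1:ℝ)^(A.card+1) * ∑ T ∈ A.powerset, (-1:ℝ)^T.card * q (Finset.univ \ T) := by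
  have step1 : ∑ B ∈ Finset.univ.powerset.filter (fun B => Finset.univ \ A ⊆ B ∧ B ≠ ∅),
      (-1:ℝ)^(A.card + B.card + n + 1) * q B
      = ∑ B ∈ Finset.univ.powerset.filter (fun B => Finset.univ \ A ⊆ B),
      (-1:ℝ)^(A.card + B.card + n + 1) * q B := by
    refine Finset.sum_subset ?_ ?_
    · intro B hB; simp only [mem_filter] at *; exact ⟨hB.1, hB.2.1⟩
    · intro B hB hB2
      simp only [mem_filter] at hB hB2
      have hBe : B = ∅ := by
        by_contra hc
        exact hB2 ⟨hB.1, hB.2, hc⟩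
      rw [hBe, hq, mul_zero]
  rw [step1, Finset.mul_sum]
  refine Finset.sum_nbij' (fun B => Finset.univ \ B) (fun T => Finset.univ \ T) ?_ ?_ ?_ ?_ ?_
  · intro B hB
    simp only [mem_filter, mem_powerset] at *
    intro x hx
    simp only [mem_sdiff, mem_univ, true_and] at hx
    by_contra hxA
    exact hx (hB.2 (by simp [mem_sdiff, hxA]))
  · intro T hT
    simp only [mem_filter, mem_powerset] at *
    refine ⟨subset_univ _, ?_⟩
    exact sdiff_subset_sdiff (Finset.Subset.refl _) hT
  · intro B _; exact Finset.sdiff_sdiff_eq_self (subset_univ B)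
  · intro T _; exact Finset.sdiff_sdiff_eq_self (subset_univ T)
  · intro B _
    rw [Finset.sdiff_sdiff_eq_self (subset_univ B)]
    have hc : (Finset.univ \ B).card + B.card = n := by
      rw [card_sdiff_add_card_eq_card (subset_univ B), card_univ, Fintype.card_fin]
    rw [show A.card + B.card + n + 1 = (A.card + 1) + (Finset.univ \ B).card + 2 * B.card
      by omega]
    rw [pow_add, pow_add, pow_mul, neg_one_sq, one_pow, mul_one, mul_assoc]

noncomputable def hh (n : ℕ) (u : Finset (Fin n) → ℝ) (T : Finset (Fin n)) : ℝ :=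
  u (Finset.univ \ T)

noncomputable def ww (n : ℕ) (u : Finset (Fin n) → ℝ) (B : Finset (Fin n)) : ℝ :=
  ∑ S ∈ B.powerset, (-1:ℝ)^S.card * hh n u S

noncomputable def WW (n : ℕ) (u : Finset (Fin n) → ℝ) (B : Finset (Fin n)) : ℝ :=
  (-1:ℝ)^B.card * ww n u B

lemma self_inv (n : ℕ) (u : Finset (Fin n) → ℝ) (A : Finset (Fin n)) :
    ∑ T ∈ A.powerset, WW n u T = hh n u A := by
  have hmi := mobius_inv (fun S => (-1:ℝ)^S.card * hh n u S) A
  have h2 : ∑ T ∈ A.powerset, (-1:ℝ)^(A.card + T.card) *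
      (∑ S ∈ T.powerset, (-1:ℝ)^S.card * hh n u S)
      = (-1:ℝ)^A.card * ∑ T ∈ A.powerset, WW n u T := by
    rw [Finset.mul_sum]
    refine Finset.sum_congr rfl fun T _ => ?_
    rw [pow_add]; unfold WW ww; ring
  rw [h2] at hmi
  have hne : ((-1:ℝ)^A.card) ≠ 0 := pow_ne_zero _ (by norm_num)
  exact mul_left_cancel₀ hne hmi

noncomputable def FF (n : ℕ) (u : Finset (Fin n) → ℝ) (A' : Finset (Fin n)) : ℝ :=
  ∑ p ∈ (A'.powerset ×ˢ A'.powerset).filter (fun p => p.1 ∪ p.2 = A'),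
    WW n u p.1 * WW n u p.2

lemma zeta_FF (n : ℕ) (u : Finset (Fin n) → ℝ) (T : Finset (Fin n)) :
    ∑ A' ∈ T.powerset, FF n u A' = hh n u T ^ 2 := by
  unfold FF
  rw [union_fiber (fun B C => WW n u B * WW n u C) T, Finset.sum_product,
    ← Finset.sum_mul_sum, self_inv, sq]

lemma FF_eq (n : ℕ) (u : Finset (Fin n) → ℝ) (A : Finset (Fin n)) :
    FF n u A = ∑ T ∈ A.powerset, (-1:ℝ)^(A.card + T.card) * hh n u T ^ 2 := by
  have hmi := mobius_inv (FF n u) A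
  rw [← hmi]
  refine Finset.sum_congr rfl fun T _ => ?_
  rw [zeta_FF]

end SumSqAux



/-- The key computation in Lemma 4.1(b):
`Σ_{N∖A ⊆ B ⊆ N, B ≠ ∅} (−1)^{|A|+|B|+n+1} (u^B)² = 2 u^N v_A − Σ_{B ∪ C = A, B,C ≠ ∅} v_B v_C`. -/
theorem sum_sq_eq (n : ℕ) (hn : 1 ≤ n)
    (u v : Finset (Fin n) → ℝ) (hu0 : u ∅ = 0)
    (hv : ∀ A : Finset (Fin n), A.Nonempty →
      v A = ∑ B ∈ Finset.univ.powerset.filter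
          (fun B => Finset.univ \ A ⊆ B ∧ B ≠ ∅),
        (-1 : ℝ) ^ (A.card + B.card + n + 1) * u B)
    (A : Finset (Fin n)) (hA : A.Nonempty) :
    ∑ B ∈ Finset.univ.powerset.filter
        (fun B => Finset.univ \ A ⊆ B ∧ B ≠ ∅),
      (-1 : ℝ) ^ (A.card + B.card + n + 1) * (u B) ^ 2
    = 2 * u Finset.univ * v A
      - ∑ p ∈ (A.powerset ×ˢ A.powerset).filter
          (fun p => p.1 ∪ p.2 = A ∧ p.1 ≠ ∅ ∧ p.2 ≠ ∅),
        v p.1 * v p.2 := by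
  classical
  have hW0 : SumSqAux.WW n u ∅ = u Finset.univ := by
    simp [SumSqAux.WW, SumSqAux.ww, SumSqAux.hh]
  have hvW : ∀ B : Finset (Fin n), B.Nonempty → v B = -SumSqAux.WW n u B := by
    intro B hB
    have hk := SumSqAux.keyA n u hu0 B
    rw [hv B hB, hk]
    unfold SumSqAux.WW SumSqAux.ww SumSqAux.hh
    rw [pow_succ]
    ring
  -- LHS
  have hL := SumSqAux.keyA n (fun B => u B ^ 2) (by simp [hu0]) A
  rw [hL]
  -- pair sum split
  have hpair : ∑ p ∈ (A.powerset ×ˢ A.powerset).filter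
          (fun p => p.1 ∪ p.2 = A ∧ p.1 ≠ ∅ ∧ p.2 ≠ ∅), v p.1 * v p.2
      = SumSqAux.FF n u A - (SumSqAux.WW n u ∅ * SumSqAux.WW n u A
          + SumSqAux.WW n u A * SumSqAux.WW n u ∅) := by
    have h1 : ∑ p ∈ (A.powerset ×ˢ A.powerset).filter
          (fun p => p.1 ∪ p.2 = A ∧ p.1 ≠ ∅ ∧ p.2 ≠ ∅), v p.1 * v p.2
        = ∑ p ∈ (A.powerset ×ˢ A.powerset).filter
          (fun p => p.1 ∪ p.2 = A ∧ p.1 ≠ ∅ ∧ p.2 ≠ ∅),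
            SumSqAux.WW n u p.1 * SumSqAux.WW n u p.2 := by
      refine Finset.sum_congr rfl fun p hp => ?_
      simp only [mem_filter] at hp
      rw [hvW p.1 (nonempty_iff_ne_empty.2 hp.2.2.1),
        hvW p.2 (nonempty_iff_ne_empty.2 hp.2.2.2)]
      ring
    rw [h1]
    have hsplit := Finset.sum_filter_add_sum_filter_not
      ((A.powerset ×ˢ A.powerset).filter (fun p => p.1 ∪ p.2 = A))
      (fun p => p.1 ≠ ∅ ∧ p.2 ≠ ∅)
      (fun p => SumSqAux.WW n u p.1 * SumSqAux.WW n u p.2)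
    rw [Finset.filter_filter] at hsplit
    have hbd : (((A.powerset ×ˢ A.powerset).filter (fun p => p.1 ∪ p.2 = A)).filter
          (fun p => ¬(p.1 ≠ ∅ ∧ p.2 ≠ ∅)))
        = ({(∅, A), (A, ∅)} : Finset (Finset (Fin n) × Finset (Fin n))) := by
      ext ⟨B, C⟩
      constructor
      · intro hm
        simp only [mem_filter, mem_product, mem_powerset, not_and, not_not] at hm
        obtain ⟨⟨⟨h1, h2⟩, h3⟩, h4⟩ := hm
        simp only [Finset.mem_insert, Finset.mem_singleton, Prod.mk.injEq]
        by_cases hB : B = ∅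
        · left; exact ⟨hB, by rw [← h3, hB, empty_union]⟩
        · right; exact ⟨by rw [← h3, h4 hB, union_empty], h4 hB⟩
      · intro hm
        simp only [Finset.mem_insert, Finset.mem_singleton, Prod.mk.injEq] at hm
        simp only [mem_filter, mem_product, mem_powerset, not_and, not_not]
        rcases hm with ⟨rfl, rfl⟩ | ⟨rfl, rfl⟩
        · exact ⟨⟨⟨empty_subset _, Finset.Subset.refl _⟩, empty_union _⟩,
            fun h => absurd rfl h⟩
        · exact ⟨⟨⟨Finset.Subset.refl _, empty_subset _⟩, union_empty _⟩, fun _ => rfl⟩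
    rw [hbd] at hsplit
    have hne : ((∅, A) : Finset (Fin n) × Finset (Fin n)) ≠ (A, ∅) :=
      fun h => hA.ne_empty (congrArg Prod.fst h).symm
    rw [Finset.sum_pair hne] at hsplit
    have : SumSqAux.FF n u A = ∑ p ∈ (A.powerset ×ˢ A.powerset).filter
        (fun p => p.1 ∪ p.2 = A), SumSqAux.WW n u p.1 * SumSqAux.WW n u p.2 := rfl
    rw [this, ← hsplit]
    ring
  rw [hpair, hvW A hA, ← hW0, SumSqAux.FF_eq]
  rw [Finset.mul_sum]
  have : ∀ T ∈ A.powerset, (-1:ℝ)^(A.card+1) * ((-1:ℝ)^T.card * u (Finset.univ \ T) ^ 2)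
      = -((-1:ℝ)^(A.card + T.card) * SumSqAux.hh n u T ^ 2) := by
    intro T _
    unfold SumSqAux.hh
    rw [pow_add, pow_succ]
    ring
  rw [Finset.sum_congr rfl this, Finset.sum_neg_distrib]
  ring
end

section
/- Suppose that for every nonempty A ⊆ N the function u^A satisfies Δu^A = 4(u^A)² at every point of D. Then for every nonempty A ⊆ N, the function v_A satisfies Δv_A = 8 u^N v_A − 4 Σ_{(B,C) : B ∪ C = A, B ≠ ∅, C ≠ ∅} v_B v_C at every point of D, where the last sum ranges over all ordered pairs (B, C) of nonempty subsets of A whose union is A. -/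
/-- The Laplacian of `f : ℝ^d → ℝ`: the sum of the second partial derivatives
`Σ_{i=1}^d ∂²f/∂x_i²`. -/
noncomputable def laplacian {d : ℕ} (f : (Fin d → ℝ) → ℝ) (x : Fin d → ℝ) : ℝ :=
  ∑ i : Fin d, fderiv ℝ (fun y => fderiv ℝ f y (Pi.single i 1)) x (Pi.single i 1)

section Aux

open Finset

private lemma negone_pow_eq {e1 e2 : ℕ} (h : e1 % 2 = e2 % 2) : ((-1:ℝ))^e1 = (-1)^e2 := by
  rw [← Nat.div_add_mod e1 2, ← Nat.div_add_mod e2 2, pow_add, pow_add, pow_mul, pow_mul]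
  simp [h]

private lemma sumE {n : ℕ} (E A : Finset (Fin n)) :
    ∑ C : Finset (Fin n), (if E ⊆ C ∧ C ⊆ A then ((-1:ℝ))^C.card else 0)
      = if E = A then ((-1:ℝ))^A.card else 0 := by
  by_cases hEA : E ⊆ A
  · rw [← Finset.sum_filter]
    have hbij : ∑ C ∈ Finset.univ.filter (fun C => E ⊆ C ∧ C ⊆ A), ((-1:ℝ))^C.card
        = ∑ D ∈ (A \ E).powerset, ((-1:ℝ))^D.card * ((-1:ℝ))^E.card := by
      refine Finset.sum_nbij' (fun C => C \ E) (fun D => D ∪ E) ?_ ?_ ?_ ?_ ?_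
      · intro C hC
        simp only [mem_filter, mem_univ, true_and] at hC
        simp only [mem_powerset]
        exact sdiff_subset_sdiff hC.2 le_rfl
      · intro D hD
        simp only [mem_powerset] at hD
        simp only [mem_filter, mem_univ, true_and]
        exact ⟨subset_union_right, union_subset (hD.trans (sdiff_subset)) hEA⟩
      · intro C hC
        simp only [mem_filter, mem_univ, true_and] at hC
        exact sdiff_union_of_subset hC.1
      · intro D hD
        simp only [mem_powerset] at hD
        have hdisj : Disjoint D E := Finset.disjoint_of_subset_left hD (Finset.sdiff_disjoint)
        show (D ∪ E) \ E = D
        rw [Finset.union_sdiff_cancel_right hdisj]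
      · intro C hC
        simp only [mem_filter, mem_univ, true_and] at hC
        show ((-1:ℝ))^C.card = ((-1:ℝ))^(C \ E).card * ((-1:ℝ))^E.card
        rw [← pow_add]
        congr 1
        exact (Finset.card_sdiff_add_card_eq_card hC.1).symm
    rw [hbij, ← Finset.sum_mul]
    have hcast : ((∑ m ∈ (A \ E).powerset, (-1 : ℤ) ^ m.card : ℤ) : ℝ)
        = ∑ m ∈ (A \ E).powerset, ((-1:ℝ)) ^ m.card := by push_cast; rfl
    rw [← hcast, Finset.sum_powerset_neg_one_pow_card]
    by_cases hAE : E = A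
    · subst hAE
      simp
    · rw [if_neg hAE, if_neg, Int.cast_zero, zero_mul]
      rw [Finset.sdiff_eq_empty_iff_subset]
      intro hsub
      exact hAE (Finset.Subset.antisymm hEA hsub)
  · rw [Finset.sum_eq_zero, eq_comm, if_neg]
    · rintro rfl; exact hEA le_rfl
    · intro C _
      rw [if_neg]
      rintro ⟨h1, h2⟩; exact hEA (h1.trans h2)

private lemma sumU {n : ℕ} (S T A : Finset (Fin n)) :
    ∑ B : Finset (Fin n), ∑ C : Finset (Fin n),
      (if B ∪ C = A ∧ S ⊆ B ∧ T ⊆ C then ((-1:ℝ))^(B.card + C.card) else 0)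
    = if S = T ∧ T ⊆ A then ((-1:ℝ))^(A.card + S.card) else 0 := by
  have h1 : ∀ B : Finset (Fin n),
      (∑ C : Finset (Fin n), (if B ∪ C = A ∧ S ⊆ B ∧ T ⊆ C then ((-1:ℝ))^(B.card + C.card) else 0))
      = if S ⊆ B ∧ B ⊆ T ∧ T ⊆ A then ((-1:ℝ))^(B.card + A.card) else 0 := by
    intro B
    by_cases hB : S ⊆ B ∧ B ⊆ A
    · have hcond : ∀ C : Finset (Fin n),
          (B ∪ C = A ∧ S ⊆ B ∧ T ⊆ C) ↔ ((A \ B) ∪ T ⊆ C ∧ C ⊆ A) := by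
        intro C
        constructor
        · rintro ⟨rfl, _, hTC⟩
          refine ⟨union_subset ?_ hTC, subset_union_right⟩
          rw [Finset.union_sdiff_left]
          exact sdiff_subset
        · rintro ⟨hEC, hCA⟩
          refine ⟨?_, hB.1, (subset_union_right.trans hEC)⟩
          apply Finset.Subset.antisymm (union_subset hB.2 hCA)
          intro a ha
          by_cases haB : a ∈ B
          · exact mem_union_left _ haB
          · exact mem_union_right _ (hEC (mem_union_left _ (mem_sdiff.2 ⟨ha, haB⟩)))
      calc ∑ C : Finset (Fin n),
            (if B ∪ C = A ∧ S ⊆ B ∧ T ⊆ C then ((-1:ℝ))^(B.card + C.card) else 0)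
          = ∑ C : Finset (Fin n), ((-1:ℝ))^B.card *
              (if (A \ B) ∪ T ⊆ C ∧ C ⊆ A then ((-1:ℝ))^C.card else 0) := by
            refine Finset.sum_congr rfl fun C _ => ?_
            rw [if_congr (hcond C) rfl rfl]
            split_ifs <;> simp [pow_add]
        _ = ((-1:ℝ))^B.card * (if (A \ B) ∪ T = A then ((-1:ℝ))^A.card else 0) := by
            rw [← Finset.mul_sum, sumE]
        _ = if S ⊆ B ∧ B ⊆ T ∧ T ⊆ A then ((-1:ℝ))^(B.card + A.card) else 0 := by
            have hiff : (A \ B) ∪ T = A ↔ (B ⊆ T ∧ T ⊆ A) := by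
              constructor
              · intro h
                constructor
                · intro a haB
                  have haA : a ∈ A := hB.2 haB
                  rw [← h] at haA
                  rcases mem_union.1 haA with h' | h'
                  · exact absurd (mem_sdiff.1 h').2 (by simp [haB])
                  · exact h'
                · rw [← h]; exact subset_union_right
              · rintro ⟨hBT, hTA⟩
                apply Finset.Subset.antisymm (union_subset sdiff_subset hTA)
                intro a ha
                by_cases haB : a ∈ B
                · exact mem_union_right _ (hBT haB)
                · exact mem_union_left _ (mem_sdiff.2 ⟨ha, haB⟩)
            rw [if_congr hiff rfl rfl]
            split_ifs with h1' h2' h2'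
            · rw [← pow_add]
            · exact absurd ⟨hB.1, h1'.1, h1'.2⟩ h2'
            · exact absurd ⟨h2'.2.1, h2'.2.2⟩ h1'
            · ring
    · rw [Finset.sum_eq_zero, if_neg]
      · intro h
        exact hB ⟨h.1, h.2.1.trans h.2.2⟩
      · intro C _
        rw [if_neg]
        rintro ⟨hU, hSB, _⟩
        exact hB ⟨hSB, hU ▸ subset_union_left⟩
  rw [Finset.sum_congr rfl (fun B _ => h1 B)]
  by_cases hT : T ⊆ A
  · calc ∑ B : Finset (Fin n), (if S ⊆ B ∧ B ⊆ T ∧ T ⊆ A then ((-1:ℝ))^(B.card + A.card) else 0)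
        = ∑ B : Finset (Fin n), ((-1:ℝ))^A.card *
            (if S ⊆ B ∧ B ⊆ T then ((-1:ℝ))^B.card else 0) := by
          refine Finset.sum_congr rfl fun B _ => ?_
          split_ifs with ha hb hb
          · rw [← pow_add]; ring_nf
          · exact absurd ⟨ha.1, ha.2.1⟩ hb
          · exact absurd ⟨hb.1, hb.2, hT⟩ ha
          · ring
      _ = ((-1:ℝ))^A.card * (if S = T then ((-1:ℝ))^T.card else 0) := by
          rw [← Finset.mul_sum, sumE]
      _ = if S = T ∧ T ⊆ A then ((-1:ℝ))^(A.card + S.card) else 0 := by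
          split_ifs with h1' h2' h2'
          · rw [← pow_add]; rw [h1']
          · exact absurd ⟨h1', hT⟩ h2'
          · exact absurd h2'.1 h1'
          · ring
  · rw [Finset.sum_eq_zero, if_neg]
    · rintro ⟨_, h⟩; exact hT h
    · intro B _
      rw [if_neg]
      rintro ⟨_, _, h⟩; exact hT h

private lemma sum_swap4 {M : Type*} [AddCommMonoid M] {ι : Type*} [Fintype ι]
    (F : ι → ι → ι → ι → M) :
    ∑ B : ι, ∑ C : ι, ∑ P : ι, ∑ Q : ι, F B C P Q
    = ∑ P : ι, ∑ Q : ι, ∑ B : ι, ∑ C : ι, F B C P Q := by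
  calc ∑ B : ι, ∑ C : ι, ∑ P : ι, ∑ Q : ι, F B C P Q
      = ∑ B : ι, ∑ P : ι, ∑ C : ι, ∑ Q : ι, F B C P Q :=
        Finset.sum_congr rfl fun B _ => Finset.sum_comm
    _ = ∑ P : ι, ∑ B : ι, ∑ C : ι, ∑ Q : ι, F B C P Q := Finset.sum_comm
    _ = ∑ P : ι, ∑ B : ι, ∑ Q : ι, ∑ C : ι, F B C P Q :=
        Finset.sum_congr rfl fun P _ => Finset.sum_congr rfl fun B _ => Finset.sum_comm
    _ = ∑ P : ι, ∑ Q : ι, ∑ B : ι, ∑ C : ι, F B C P Q :=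
        Finset.sum_congr rfl fun P _ => Finset.sum_comm

private lemma pair_single {n : ℕ} (b0 c0 : Finset (Fin n))
    (f : Finset (Fin n) → Finset (Fin n) → ℝ) :
    ∑ B : Finset (Fin n), ∑ C : Finset (Fin n), (if B = b0 ∧ C = c0 then f B C else 0)
      = f b0 c0 := by
  have inner : ∀ B, (∑ C : Finset (Fin n), if B = b0 ∧ C = c0 then f B C else 0)
      = if B = b0 then f B c0 else 0 := by
    intro B
    by_cases hB : B = b0
    · simp only [hB, true_and, if_pos rfl]
      rw [Finset.sum_ite_eq' Finset.univ c0 (f b0)]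
      simp
    · simp [hB]
  rw [Finset.sum_congr rfl fun B _ => inner B,
    Finset.sum_ite_eq' Finset.univ b0 (fun B => f B c0)]
  simp

private lemma key_identity {n : ℕ} (hn : 1 ≤ n) (a : Finset (Fin n) → ℝ)
    (A : Finset (Fin n)) (hA : A ≠ ∅) (w : Finset (Fin n) → ℝ)
    (hw : ∀ B, w B = ∑ P : Finset (Fin n),
      (if Finset.univ \ B ⊆ P ∧ P ≠ ∅ then ((-1:ℝ))^(B.card + P.card + n + 1) * a P else 0)) :
    ∑ B : Finset (Fin n), (if Finset.univ \ A ⊆ B ∧ B ≠ ∅ then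
        ((-1:ℝ))^(A.card + B.card + n + 1) * (a B)^2 else 0)
    = 2 * a Finset.univ * w A
      - ∑ B : Finset (Fin n), ∑ C : Finset (Fin n),
          (if B ∪ C = A ∧ B ≠ ∅ ∧ C ≠ ∅ then w B * w C else 0) := by
  have huniv_ne : (Finset.univ : Finset (Fin n)) ≠ ∅ := by
    have : Nonempty (Fin n) := ⟨⟨0, hn⟩⟩
    exact Finset.univ_nonempty.ne_empty
  have hwe : w ∅ = - a Finset.univ := by
    rw [hw]
    have hiff : ∀ P : Finset (Fin n),
        ((Finset.univ : Finset (Fin n)) \ ∅ ⊆ P ∧ P ≠ ∅) ↔ P = Finset.univ := by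
      intro P
      constructor
      · rintro ⟨h, -⟩
        exact Finset.univ_subset_iff.1 (by simpa using h)
      · rintro rfl
        exact ⟨by simp, huniv_ne⟩
    rw [Finset.sum_congr rfl (fun P _ => if_congr (hiff P) rfl rfl),
      Finset.sum_ite_eq' Finset.univ Finset.univ
        (fun P => ((-1:ℝ))^((∅ : Finset (Fin n)).card + P.card + n + 1) * a P)]
    simp only [Finset.mem_univ, if_pos, Finset.card_empty, Finset.card_univ, Fintype.card_fin]
    rw [negone_pow_eq (e2 := 1) (by omega), pow_one]
    ring
  have hfull : (∑ B : Finset (Fin n), ∑ C : Finset (Fin n),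
        (if B ∪ C = A then w B * w C else 0))
      = - ∑ B : Finset (Fin n), (if Finset.univ \ A ⊆ B ∧ B ≠ ∅ then
          ((-1:ℝ))^(A.card + B.card + n + 1) * (a B)^2 else 0) := by
    have hexpand : ∀ B C : Finset (Fin n), (if B ∪ C = A then w B * w C else 0)
        = ∑ P : Finset (Fin n), ∑ Q : Finset (Fin n),
            (if (B ∪ C = A ∧ (Finset.univ \ B ⊆ P ∧ P ≠ ∅) ∧ (Finset.univ \ C ⊆ Q ∧ Q ≠ ∅))
             then ((-1:ℝ))^(B.card + P.card + n + 1) * a P *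
                  (((-1:ℝ))^(C.card + Q.card + n + 1) * a Q) else 0) := by
      intro B C
      by_cases h : B ∪ C = A
      · rw [if_pos h, hw B, hw C, Finset.sum_mul_sum]
        refine Finset.sum_congr rfl fun P _ => Finset.sum_congr rfl fun Q _ => ?_
        simp only [h, true_and]
        rw [ite_zero_mul_ite_zero]
      · rw [if_neg h, eq_comm]
        exact Finset.sum_eq_zero fun P _ => Finset.sum_eq_zero fun Q _ =>
          if_neg (fun hh => h hh.1)
    rw [Finset.sum_congr rfl fun B _ => Finset.sum_congr rfl fun C _ => hexpand B C,
      sum_swap4]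
    have hinner : ∀ P Q : Finset (Fin n),
        (∑ B : Finset (Fin n), ∑ C : Finset (Fin n),
          (if (B ∪ C = A ∧ (Finset.univ \ B ⊆ P ∧ P ≠ ∅) ∧ (Finset.univ \ C ⊆ Q ∧ Q ≠ ∅))
             then ((-1:ℝ))^(B.card + P.card + n + 1) * a P *
                  (((-1:ℝ))^(C.card + Q.card + n + 1) * a Q) else 0))
        = if (P = Q ∧ Finset.univ \ A ⊆ P ∧ P ≠ ∅) then
            ((-1:ℝ))^(P.card + Q.card) *
              ((-1:ℝ))^(A.card + (Finset.univ \ P).card) * (a P * a Q) else 0 := by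
      intro P Q
      by_cases hPQ : P ≠ ∅ ∧ Q ≠ ∅
      · have hc1 : ∀ B : Finset (Fin n), Finset.univ \ B ⊆ P ↔ Finset.univ \ P ⊆ B := by
          intro B
          rw [← Finset.le_iff_subset, ← Finset.le_iff_subset]; exact sdiff_le_comm
        have hc2 : ∀ C : Finset (Fin n), Finset.univ \ C ⊆ Q ↔ Finset.univ \ Q ⊆ C := by
          intro C
          rw [← Finset.le_iff_subset, ← Finset.le_iff_subset]; exact sdiff_le_comm
        have step1 : ∀ B C : Finset (Fin n),
            (if (B ∪ C = A ∧ (Finset.univ \ B ⊆ P ∧ P ≠ ∅) ∧ (Finset.univ \ C ⊆ Q ∧ Q ≠ ∅))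
             then ((-1:ℝ))^(B.card + P.card + n + 1) * a P *
                  (((-1:ℝ))^(C.card + Q.card + n + 1) * a Q) else 0)
            = (((-1:ℝ))^(P.card + Q.card) * (a P * a Q)) *
              (if (B ∪ C = A ∧ Finset.univ \ P ⊆ B ∧ Finset.univ \ Q ⊆ C)
               then ((-1:ℝ))^(B.card + C.card) else 0) := by
          intro B C
          have hiff : (B ∪ C = A ∧ (Finset.univ \ B ⊆ P ∧ P ≠ ∅) ∧ (Finset.univ \ C ⊆ Q ∧ Q ≠ ∅))
              ↔ (B ∪ C = A ∧ Finset.univ \ P ⊆ B ∧ Finset.univ \ Q ⊆ C) := by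
            constructor
            · rintro ⟨h1, ⟨h2, -⟩, ⟨h3, -⟩⟩
              exact ⟨h1, (hc1 B).1 h2, (hc2 C).1 h3⟩
            · rintro ⟨h1, h2, h3⟩
              exact ⟨h1, ⟨(hc1 B).2 h2, hPQ.1⟩, ⟨(hc2 C).2 h3, hPQ.2⟩⟩
          rw [if_congr hiff rfl rfl, mul_ite, mul_zero]
          split_ifs with hcond
          · rw [show ((-1:ℝ))^(B.card + P.card + n + 1) * a P *
                  (((-1:ℝ))^(C.card + Q.card + n + 1) * a Q)
                = (((-1:ℝ))^(B.card + P.card + n + 1) * ((-1:ℝ))^(C.card + Q.card + n + 1)) *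
                  (a P * a Q) by ring, ← pow_add,
              negone_pow_eq (e2 := (B.card + C.card) + (P.card + Q.card)) (by omega), pow_add]
            ring
          · rfl
        rw [Finset.sum_congr rfl fun B _ => Finset.sum_congr rfl fun C _ => step1 B C]
        simp only [← Finset.mul_sum]
        rw [sumU, mul_ite, mul_zero]
        have e1 : (Finset.univ \ P = Finset.univ \ Q) ↔ P = Q := by
          rw [← Finset.compl_eq_univ_sdiff, ← Finset.compl_eq_univ_sdiff, compl_inj_iff]
        have e2 : (Finset.univ \ Q ⊆ A) ↔ Finset.univ \ A ⊆ Q := by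
          rw [← Finset.compl_eq_univ_sdiff, ← Finset.compl_eq_univ_sdiff,
            ← Finset.le_iff_subset, ← Finset.le_iff_subset]
          exact compl_le_iff_compl_le
        refine if_congr ?_ (by ring) rfl
        constructor
        · rintro ⟨h1, h2⟩
          have hpq : P = Q := e1.1 h1
          refine ⟨hpq, ?_, hPQ.1⟩
          rw [hpq]
          exact e2.1 h2
        · rintro ⟨hpq, h2, -⟩
          refine ⟨e1.2 hpq, e2.2 ?_⟩
          rw [← hpq]
          exact h2
      · rw [eq_comm, if_neg, Finset.sum_eq_zero]
        · intro B _
          apply Finset.sum_eq_zero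
          intro C _
          rw [if_neg]
          rintro ⟨-, ⟨-, hP⟩, ⟨-, hQ⟩⟩
          exact hPQ ⟨hP, hQ⟩
        · rintro ⟨rfl, -, hP⟩
          exact hPQ ⟨hP, hP⟩
    rw [Finset.sum_congr rfl fun P _ => Finset.sum_congr rfl fun Q _ => hinner P Q]
    have hcoll : ∀ P : Finset (Fin n),
        (∑ Q : Finset (Fin n), if (P = Q ∧ Finset.univ \ A ⊆ P ∧ P ≠ ∅) then
            ((-1:ℝ))^(P.card + Q.card) *
              ((-1:ℝ))^(A.card + (Finset.univ \ P).card) * (a P * a Q) else 0)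
        = - (if (Finset.univ \ A ⊆ P ∧ P ≠ ∅) then
            ((-1:ℝ))^(A.card + P.card + n + 1) * (a P)^2 else 0) := by
      intro P
      by_cases hP : Finset.univ \ A ⊆ P ∧ P ≠ ∅
      · have hcongr : ∀ Q : Finset (Fin n),
            (if (P = Q ∧ Finset.univ \ A ⊆ P ∧ P ≠ ∅) then
              ((-1:ℝ))^(P.card + Q.card) *
                ((-1:ℝ))^(A.card + (Finset.univ \ P).card) * (a P * a Q) else 0)
            = if Q = P then ((-1:ℝ))^(P.card + Q.card) *
                ((-1:ℝ))^(A.card + (Finset.univ \ P).card) * (a P * a Q) else 0 := by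
          intro Q
          refine if_congr ?_ rfl rfl
          constructor
          · rintro ⟨h, -⟩; exact h.symm
          · rintro rfl; exact ⟨rfl, hP⟩
        rw [Finset.sum_congr rfl fun Q _ => hcongr Q,
          Finset.sum_ite_eq' Finset.univ P
            (fun Q => ((-1:ℝ))^(P.card + Q.card) *
              ((-1:ℝ))^(A.card + (Finset.univ \ P).card) * (a P * a Q)),
          if_pos (Finset.mem_univ P), if_pos hP]
        have hc : (Finset.univ \ P).card + P.card = n := by
          rw [Finset.card_sdiff_add_card_eq_card (Finset.subset_univ P), Finset.card_univ,
            Fintype.card_fin]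
        rw [show -(((-1:ℝ))^(A.card + P.card + n + 1) * (a P)^2)
            = ((-1:ℝ))^(A.card + P.card + n + 1 + 1) * (a P)^2 by rw [pow_succ]; ring,
          show ((-1:ℝ))^(P.card + P.card) * ((-1:ℝ))^(A.card + (Finset.univ \ P).card)
              * (a P * a P)
            = ((-1:ℝ))^((P.card + P.card) + (A.card + (Finset.univ \ P).card)) * (a P)^2 by
              rw [pow_add]; ring]
        congr 1
        exact negone_pow_eq (by omega)
      · rw [if_neg hP, neg_zero, Finset.sum_eq_zero]
        intro Q _
        rw [if_neg]
        rintro ⟨-, h⟩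
        exact hP h
    rw [Finset.sum_congr rfl fun P _ => hcoll P, Finset.sum_neg_distrib]
  have hsplit : (∑ B : Finset (Fin n), ∑ C : Finset (Fin n),
        (if B ∪ C = A then w B * w C else 0))
      = (∑ B : Finset (Fin n), ∑ C : Finset (Fin n),
          (if B ∪ C = A ∧ B ≠ ∅ ∧ C ≠ ∅ then w B * w C else 0))
        + w ∅ * w A + w A * w ∅ := by
    have point : ∀ B C : Finset (Fin n), (if B ∪ C = A then w B * w C else 0)
        = (if B ∪ C = A ∧ B ≠ ∅ ∧ C ≠ ∅ then w B * w C else 0)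
          + (if B = ∅ ∧ C = A then w B * w C else 0)
          + (if B = A ∧ C = ∅ then w B * w C else 0) := by
      intro B C
      by_cases h : B ∪ C = A
      · by_cases hB : B = ∅
        · subst hB
          rw [Finset.empty_union] at h
          subst h
          have h1 : ¬ ((∅ : Finset (Fin n)) = C) := fun hh => hA hh.symm
          simp [hA, h1]
        · by_cases hC : C = ∅
          · subst hC
            rw [Finset.union_empty] at h
            subst h
            simp [hA, hB]
          · simp [h, hB, hC]
      · have h2 : ¬ (B = ∅ ∧ C = A) := by rintro ⟨rfl, rfl⟩; exact h (by simp)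
        have h3 : ¬ (B = A ∧ C = ∅) := by rintro ⟨rfl, rfl⟩; exact h (by simp)
        rw [if_neg h, if_neg (fun hh => h hh.1), if_neg h2, if_neg h3]
        norm_num
    rw [Finset.sum_congr rfl fun B _ => Finset.sum_congr rfl fun C _ => point B C]
    simp only [Finset.sum_add_distrib]
    rw [pair_single ∅ A (fun B C => w B * w C), pair_single A ∅ (fun B C => w B * w C)]
  rw [hwe] at hsplit
  linear_combination hfull - hsplit

private lemma laplacian_finsum {d : ℕ} {ι : Type*} (s : Finset ι) (f : ι → (Fin d → ℝ) → ℝ)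
    (c : ι → ℝ) {D : Set (Fin d → ℝ)} (hD : IsOpen D)
    (hf : ∀ i ∈ s, ContDiffOn ℝ 2 (f i) D) {x : Fin d → ℝ} (hx : x ∈ D) :
    laplacian (fun y => ∑ i ∈ s, c i * f i y) x = ∑ i ∈ s, c i * laplacian (f i) x := by
  have hdiff : ∀ i ∈ s, ∀ y ∈ D, DifferentiableAt ℝ (f i) y := fun i hi y hy =>
    ((hf i hi).contDiffAt (hD.mem_nhds hy)).differentiableAt two_ne_zero
  have perdir : ∀ e : Fin d → ℝ,
      fderiv ℝ (fun y => fderiv ℝ (fun z => ∑ i ∈ s, c i * f i z) y e) x e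
      = ∑ i ∈ s, c i * fderiv ℝ (fun y => fderiv ℝ (f i) y e) x e := by
    intro e
    have hEv : (fun y => fderiv ℝ (fun z => ∑ i ∈ s, c i * f i z) y e)
        =ᶠ[nhds x] (fun y => ∑ i ∈ s, c i * fderiv ℝ (f i) y e) := by
      filter_upwards [hD.mem_nhds hx] with y hy
      rw [fderiv_fun_sum (fun i hi => (hdiff i hi y hy).const_mul (c i)),
        ContinuousLinearMap.sum_apply]
      refine Finset.sum_congr rfl fun i hi => ?_
      rw [fderiv_const_mul (hdiff i hi y hy) (c i), ContinuousLinearMap.smul_apply,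
        smul_eq_mul]
    rw [hEv.fderiv_eq]
    have hgdiff : ∀ i ∈ s, DifferentiableAt ℝ (fun y => fderiv ℝ (f i) y e) x := by
      intro i hi
      have h2 : ContDiffAt ℝ 2 (f i) x := (hf i hi).contDiffAt (hD.mem_nhds hx)
      have h1 : ContDiffAt ℝ 1 (fderiv ℝ (f i)) x := h2.fderiv_right (by norm_num)
      have hd : DifferentiableAt ℝ (fderiv ℝ (f i)) x := h1.differentiableAt one_ne_zero
      exact ((ContinuousLinearMap.apply ℝ ℝ e).differentiableAt).comp x hd
    rw [fderiv_fun_sum (fun i hi => (hgdiff i hi).const_mul (c i)),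
      ContinuousLinearMap.sum_apply]
    refine Finset.sum_congr rfl fun i hi => ?_
    rw [fderiv_const_mul (hgdiff i hi) (c i), ContinuousLinearMap.smul_apply, smul_eq_mul]
  calc ∑ k : Fin d, fderiv ℝ (fun y => fderiv ℝ (fun z => ∑ i ∈ s, c i * f i z) y
          (Pi.single k 1)) x (Pi.single k 1)
      = ∑ k : Fin d, ∑ i ∈ s, c i * fderiv ℝ (fun y => fderiv ℝ (f i) y (Pi.single k 1)) x
          (Pi.single k 1) := Finset.sum_congr rfl fun k _ => perdir (Pi.single k 1)
    _ = ∑ i ∈ s, ∑ k : Fin d, c i * fderiv ℝ (fun y => fderiv ℝ (f i) y (Pi.single k 1)) x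
          (Pi.single k 1) := Finset.sum_comm
    _ = ∑ i ∈ s, c i * laplacian (f i) x := by
        refine Finset.sum_congr rfl fun i _ => ?_
        rw [laplacian, Finset.mul_sum]

end Aux

/-- Lemma 4.1(b): if `Δu^A = 4(u^A)²` on `D` for every nonempty `A ⊆ N`, then
`Δv_A = 8 u^N v_A − 4 Σ_{B ∪ C = A, B,C ≠ ∅} v_B v_C` on `D`. -/
theorem laplacian_v_eq (d n : ℕ) (hn : 1 ≤ n) (D : Set (Fin d → ℝ)) (hD : IsOpen D)
    (u v : Finset (Fin n) → (Fin d → ℝ) → ℝ)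
    (hu0 : u ∅ = fun _ => 0)
    (husmooth : ∀ A : Finset (Fin n), A.Nonempty → ContDiffOn ℝ 2 (u A) D)
    (hupde : ∀ A : Finset (Fin n), A.Nonempty → ∀ x ∈ D,
      laplacian (u A) x = 4 * (u A x) ^ 2)
    (hv : ∀ (A : Finset (Fin n)), A.Nonempty → ∀ x : Fin d → ℝ,
      v A x = ∑ B ∈ Finset.univ.powerset.filter
          (fun B => Finset.univ \ A ⊆ B ∧ B ≠ ∅),
        (-1 : ℝ) ^ (A.card + B.card + n + 1) * u B x)
    (A : Finset (Fin n)) (hA : A.Nonempty) :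
    ∀ x ∈ D, laplacian (v A) x =
      8 * u Finset.univ x * v A x -
        4 * ∑ p ∈ (A.powerset ×ˢ A.powerset).filter
            (fun p => p.1 ∪ p.2 = A ∧ p.1 ≠ ∅ ∧ p.2 ≠ ∅),
          v p.1 x * v p.2 x := by
  intro x hx
  classical
  set SA := Finset.univ.powerset.filter
      (fun B : Finset (Fin n) => Finset.univ \ A ⊆ B ∧ B ≠ ∅) with hSA
  -- the point values of u
  set a : Finset (Fin n) → ℝ := fun B => u B x with ha
  -- the w function from the key identity
  set w : Finset (Fin n) → ℝ := fun B => ∑ P : Finset (Fin n),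
      (if Finset.univ \ B ⊆ P ∧ P ≠ ∅ then ((-1:ℝ))^(B.card + P.card + n + 1) * a P else 0)
    with hwdef
  have hvw : ∀ B : Finset (Fin n), B ≠ ∅ → v B x = w B := by
    intro B hB
    rw [hv B (Finset.nonempty_iff_ne_empty.2 hB) x, hwdef]
    rw [Finset.powerset_univ, Finset.sum_filter]
  -- step 1: compute the laplacian of v A
  have hvA : v A = fun y => ∑ B ∈ SA, ((-1:ℝ))^(A.card + B.card + n + 1) * u B y :=
    funext fun y => hv A hA y
  have hlap : laplacian (v A) x
      = ∑ B ∈ SA, ((-1:ℝ))^(A.card + B.card + n + 1) * (4 * (a B)^2) := by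
    rw [hvA, laplacian_finsum SA u (fun B => ((-1:ℝ))^(A.card + B.card + n + 1)) hD
      (fun B hB => husmooth B
        (Finset.nonempty_iff_ne_empty.2 (Finset.mem_filter.1 hB).2.2)) hx]
    refine Finset.sum_congr rfl fun B hB => ?_
    rw [hupde B (Finset.nonempty_iff_ne_empty.2 (Finset.mem_filter.1 hB).2.2) x hx]
  -- step 2: rewrite as an if-sum and pull out the factor 4
  have hlap4 : laplacian (v A) x
      = 4 * ∑ B : Finset (Fin n), (if Finset.univ \ A ⊆ B ∧ B ≠ ∅ then
          ((-1:ℝ))^(A.card + B.card + n + 1) * (a B)^2 else 0) := by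
    rw [hlap, hSA, Finset.powerset_univ, Finset.sum_filter, Finset.mul_sum]
    refine Finset.sum_congr rfl fun B _ => ?_
    split_ifs <;> ring
  -- step 3: rewrite the pair sum
  have hpair : (∑ p ∈ (A.powerset ×ˢ A.powerset).filter
        (fun p => p.1 ∪ p.2 = A ∧ p.1 ≠ ∅ ∧ p.2 ≠ ∅), v p.1 x * v p.2 x)
      = ∑ B : Finset (Fin n), ∑ C : Finset (Fin n),
          (if B ∪ C = A ∧ B ≠ ∅ ∧ C ≠ ∅ then w B * w C else 0) := by
    rw [Finset.sum_filter]
    rw [Finset.sum_subset (Finset.subset_univ (A.powerset ×ˢ A.powerset))]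
    · rw [← Finset.univ_product_univ, Finset.sum_product]
      refine Finset.sum_congr rfl fun B _ => Finset.sum_congr rfl fun C _ => ?_
      by_cases h : B ∪ C = A ∧ B ≠ ∅ ∧ C ≠ ∅
      · rw [if_pos h, if_pos h, hvw B h.2.1, hvw C h.2.2]
      · rw [if_neg h, if_neg h]
    · intro p _ hp
      rw [if_neg]
      rintro ⟨hU, -, -⟩
      refine hp (Finset.mem_product.2 ⟨Finset.mem_powerset.2 ?_, Finset.mem_powerset.2 ?_⟩)
      · exact hU ▸ Finset.subset_union_left
      · exact hU ▸ Finset.subset_union_right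
  -- step 4: apply the key identity
  have hkey := key_identity hn a A hA.ne_empty w (fun B => rfl)
  rw [hlap4, hkey, hpair, hvw A hA.ne_empty]
  show 4 * (2 * a Finset.univ * w A - _) = 8 * a Finset.univ * w A - 4 * _
  ring
end

section
/- For every nonempty subset A ⊆ N one has v^A = Σ_{B : A ⊆ B ⊆ N} v_B. -/
/-! Expanding each `v_B` in terms of `u` and exchanging the two sums, the coefficient of `u^C` becomes
the signed count `Σ_{B ⊇ A ∪ Cᶜ} (-1)^|B|`. This vanishes unless `A ∪ Cᶜ = N`, i.e. `C ⊆ A`, where it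
is `(-1)^n`, and the resulting sign `(-1)^(|C| + 1)` is the one in `v^A`. -/

open Finset

section
variable {α R : Type*} [Fintype α] [DecidableEq α] [Ring R]

theorem sum_supersets_neg_one_pow_card (D : Finset α) :
    ∑ B ∈ univ.powerset.filter (D ⊆ ·), (-1 : R) ^ #B =
      if D = univ then (-1) ^ Fintype.card α else 0 := by
  have hsupersets : univ.powerset.filter (D ⊆ ·) = Dᶜ.powerset.image (D ∪ ·) := by
    rw [compl_eq_univ_sdiff, ← Icc_eq_image_powerset (subset_univ D)]
    ext B
    simp
  have hdisj {E : Finset α} (hE : E ∈ Dᶜ.powerset) : Disjoint D E :=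
    disjoint_compl_right.mono_right (mem_powerset.1 hE)
  have hinj : Set.InjOn (D ∪ ·) Dᶜ.powerset := fun E hE F hF h => by
    rw [← union_sdiff_cancel_left (hdisj hE), ← union_sdiff_cancel_left (hdisj hF)]
    exact congrArg (· \ D) h
  have hsubsets : ∑ E ∈ Dᶜ.powerset, (-1 : R) ^ #E = if D = univ then 1 else 0 := by
    simpa [apply_ite] using congrArg (Int.cast : ℤ → R) (sum_powerset_neg_one_pow_card (x := Dᶜ))
  calc ∑ B ∈ univ.powerset.filter (D ⊆ ·), (-1 : R) ^ #B
      = ∑ E ∈ Dᶜ.powerset, (-1 : R) ^ #D * (-1) ^ #E := by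
        rw [hsupersets, sum_image hinj]
        exact sum_congr rfl fun E hE => by rw [card_union_of_disjoint (hdisj hE), pow_add]
    _ = if D = univ then (-1) ^ Fintype.card α else 0 := by
        rw [← mul_sum, hsubsets]
        split_ifs with h
        · simp [h]
        · simp

theorem union_compl_eq_univ_iff (A C : Finset α) : A ∪ Cᶜ = univ ↔ C ⊆ A := by
  rw [← compl_inj_iff, compl_union, compl_compl, compl_univ, ← disjoint_iff_inter_eq_empty,
    disjoint_compl_left_iff]

end

theorem vUpper_eq_sum_vLower_general (n : ℕ)
    (u vLower vUpper : Finset (Fin n) → ℝ)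
    (hvLower : ∀ A : Finset (Fin n), A.Nonempty →
      vLower A = ∑ B ∈ Finset.univ.powerset.filter
          (fun B => Finset.univ \ A ⊆ B ∧ B ≠ ∅),
        (-1 : ℝ) ^ (A.card + B.card + n + 1) * u B)
    (hvUpper : ∀ A : Finset (Fin n), A.Nonempty →
      vUpper A = ∑ B ∈ A.powerset.filter (fun B => B ≠ ∅),
        (-1 : ℝ) ^ (B.card + 1) * u B)
    (A : Finset (Fin n)) (hA : A.Nonempty) :
    vUpper A = ∑ B ∈ Finset.univ.powerset.filter (fun B => A ⊆ B), vLower B := by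
  have hswap : ∑ B ∈ univ.powerset.filter (A ⊆ ·), vLower B =
      ∑ C ∈ univ.powerset.filter (· ≠ ∅),
        ∑ B ∈ univ.powerset.filter (A ∪ Cᶜ ⊆ ·), (-1 : ℝ) ^ (#B + #C + n + 1) * u C := by
    rw [sum_congr rfl fun B hB => hvLower B (hA.mono (mem_filter.1 hB).2)]
    refine sum_comm' fun B C => ?_
    have hcompl : Bᶜ ⊆ C ↔ Cᶜ ⊆ B := compl_le_iff_compl_le
    simp only [mem_filter, mem_powerset, subset_univ, true_and, ← compl_eq_univ_sdiff,
      union_subset_iff, hcompl]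
    tauto
  have hinner (C : Finset (Fin n)) :
      ∑ B ∈ univ.powerset.filter (A ∪ Cᶜ ⊆ ·), (-1 : ℝ) ^ (#B + #C + n + 1) * u C =
        if C ⊆ A then (-1) ^ (#C + 1) * u C else 0 := by
    have hsplit (B : Finset (Fin n)) :
        (-1 : ℝ) ^ (#B + #C + n + 1) * u C = (-1) ^ #B * ((-1) ^ (#C + n + 1) * u C) := by
      ring
    rw [sum_congr rfl fun B _ => hsplit B, ← sum_mul, sum_supersets_neg_one_pow_card]
    simp only [union_compl_eq_univ_iff, Fintype.card_fin]
    split_ifs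
    · rw [← mul_assoc, ← pow_add, show n + (#C + n + 1) = #C + 1 + 2 * n by ring, pow_add,
        pow_mul, neg_one_sq, one_pow, mul_one]
    · rw [zero_mul]
  rw [hvUpper A hA, hswap, sum_congr rfl fun C _ => hinner C, ← sum_filter, filter_filter]
  refine sum_congr ?_ fun _ _ => rfl
  ext C
  simp [and_comm]

/-- Remark 4.2: `v^A = Σ_{A ⊆ B ⊆ N} v_B` for every nonempty `A ⊆ N`. -/
theorem vUpper_eq_sum_vLower (n : ℕ) (hn : 1 ≤ n)
    (u vLower vUpper : Finset (Fin n) → ℝ) (hu0 : u ∅ = 0)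
    (hvLower : ∀ A : Finset (Fin n), A.Nonempty →
      vLower A = ∑ B ∈ Finset.univ.powerset.filter
          (fun B => Finset.univ \ A ⊆ B ∧ B ≠ ∅),
        (-1 : ℝ) ^ (A.card + B.card + n + 1) * u B)
    (hvUpper : ∀ A : Finset (Fin n), A.Nonempty →
      vUpper A = ∑ B ∈ A.powerset.filter (fun B => B ≠ ∅),
        (-1 : ℝ) ^ (B.card + 1) * u B)
    (A : Finset (Fin n)) (hA : A.Nonempty) :
    vUpper A = ∑ B ∈ Finset.univ.powerset.filter (fun B => A ⊆ B), vLower B :=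
  vUpper_eq_sum_vLower_general n u vLower vUpper hvLower hvUpper A hA
end

section
/- Let a be a real number and define c_k = a^k · (2(k−1))! / (k−1)! for each integer k ≥ 1. Then for every integer k ≥ 2 one has c_k = Σ_{j=1}^{k−1} C(k, j) · c_j · c_{k−j}, where C(k, j) denotes the binomial coefficient. -/
/-!
Since `(2m)! / m! = Cat(m) (m+1)!`, one has `c_k = a^k k! Cat(k-1)`. In the sum the binomial
coefficient cancels the factorials `j! (k-j)!` against `k!`, leaving `a^k k!` times
`Σ Cat(j-1) Cat(k-j-1)`, which is `Cat(k-1)` by Segner's recurrence for the Catalan numbers.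
-/

open Finset

theorem factorial_two_mul_eq_catalan_mul (m : ℕ) :
    (2 * m).factorial = catalan m * m.factorial * (m + 1).factorial := by
  have hsplit := Nat.choose_mul_factorial_mul_factorial (show m ≤ 2 * m by omega)
  rw [show 2 * m - m = m by omega, ← Nat.centralBinom_eq_two_mul_choose,
    ← succ_mul_catalan_eq_centralBinom] at hsplit
  rw [← hsplit, Nat.factorial_succ]
  ring

theorem cast_factorial_two_mul_div_factorial {K : Type*} [Field K] [CharZero K] (m : ℕ) :
    ((2 * m).factorial : K) / m.factorial = (m + 1).factorial * catalan m := by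
  rw [div_eq_iff (Nat.cast_ne_zero.mpr m.factorial_ne_zero), factorial_two_mul_eq_catalan_mul]
  push_cast
  ring

theorem catalan_succ_eq_sum_Ico (n : ℕ) :
    catalan (n + 1) = ∑ j ∈ Ico 1 (n + 2), catalan (j - 1) * catalan (n + 1 - j) := by
  rw [catalan_succ, Fin.sum_univ_eq_sum_range (fun i => catalan i * catalan (n - i)),
    sum_Ico_eq_sum_range]
  refine sum_congr rfl fun i hi => ?_
  rw [show 1 + i - 1 = i by omega, show n + 1 - (1 + i) = n - i by omega]

theorem choose_mul_pow_mul_factorial_mul_pow_mul_factorial {R : Type*} [CommSemiring R]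
    (a x y : R) {k j : ℕ} (hj : j ≤ k) :
    (k.choose j : R) * (a ^ j * j.factorial * x) * (a ^ (k - j) * (k - j).factorial * y)
      = a ^ k * k.factorial * (x * y) := by
  have hsplit : (k.choose j : R) * j.factorial * (k - j).factorial = k.factorial := by
    rw [← Nat.cast_mul, ← Nat.cast_mul, Nat.choose_mul_factorial_mul_factorial hj]
  rw [← hsplit, ← pow_mul_pow_sub a hj]
  ring

/-- Remark 3.4 / Lemma 3.1 of Serlet: the numbers `c_k = a^k (2(k−1))!/(k−1)!` satisfy the
recurrence `c_k = Σ_{j=1}^{k−1} C(k,j) c_j c_{k−j}` for all `k ≥ 2`. -/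
theorem c_recurrence (a : ℝ) (c : ℕ → ℝ)
    (hc : ∀ k : ℕ, 1 ≤ k →
      c k = a ^ k * ((2 * (k - 1)).factorial : ℝ) / ((k - 1).factorial : ℝ))
    (k : ℕ) (hk : 2 ≤ k) :
    c k = ∑ j ∈ Finset.Ico 1 k, (k.choose j : ℝ) * c j * c (k - j) := by
  have hc' : ∀ j, 1 ≤ j → c j = a ^ j * j.factorial * catalan (j - 1) := by
    intro j hj
    obtain ⟨i, rfl⟩ : ∃ i, j = i + 1 := ⟨j - 1, by omega⟩
    rw [hc _ hj, mul_div_assoc, Nat.add_sub_cancel, cast_factorial_two_mul_div_factorial,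
      mul_assoc]
  obtain ⟨n, rfl⟩ : ∃ n, k = n + 2 := ⟨k - 2, by omega⟩
  have hterm : ∀ j ∈ Ico 1 (n + 2), ((n + 2).choose j : ℝ) * c j * c (n + 2 - j)
      = a ^ (n + 2) * (n + 2).factorial * (catalan (j - 1) * catalan (n + 1 - j) : ℕ) := by
    intro j hj
    rw [mem_Ico] at hj
    rw [hc' j hj.1, hc' _ (by omega),
      choose_mul_pow_mul_factorial_mul_pow_mul_factorial a _ _ hj.2.le,
      show n + 2 - j - 1 = n + 1 - j by omega, Nat.cast_mul]
  rw [sum_congr rfl hterm, ← mul_sum, ← Nat.cast_sum, ← catalan_succ_eq_sum_Ico, hc' _ (by omega)]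
  rfl
end

section
/- Let n ≥ 1, N = {1, 2, …, n}, let A be a nonempty subset of N, and let C, C′ be nonempty subsets of N. Then Σ_{B} (−1)^{|B|} = (−1)^{n−|A|} · ( 1_{C∪C′=A} − 1_{C=A} − 1_{C′=A} ), where the sum ranges over all subsets B of N with N∖A ⊆ B ⊆ N, B ∩ C ≠ ∅ and B ∩ C′ ≠ ∅, and 1_{P} equals 1 if the condition P holds and 0 otherwise. -/
/-!
Restricting to `B ⊇ Aᶜ`, the two conditions `B ∩ C ≠ ∅`, `B ∩ C' ≠ ∅` are removed by
inclusion–exclusion, which leaves four sums over the Boolean intervals `[Aᶜ, Eᶜ]` for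
`E = ∅, C, C', C ∪ C'`. The alternating sum `∑_{B ∈ [s, t]} (-1)^|B|` is the Möbius function of
the Boolean lattice: it vanishes unless `s = t`.
-/

open Finset

namespace Finset

variable {α : Type*} [DecidableEq α]

theorem sum_Icc_neg_one_pow_card_s13 (s t : Finset α) :
    ∑ B ∈ Icc s t, (-1 : ℤ) ^ #B = if s = t then (-1) ^ #s else 0 := by
  by_cases hst : s ⊆ t
  · have hdisj : ∀ u ∈ (t \ s).powerset, Disjoint s u := fun u hu =>
      disjoint_of_subset_right (mem_powerset.1 hu) disjoint_sdiff
    have hinj : Set.InjOn (s ∪ ·) (t \ s).powerset := fun u hu v hv huv =>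
      calc u = (s ∪ u) \ s := (union_sdiff_cancel_left (hdisj u hu)).symm
        _ = (s ∪ v) \ s := congrArg (· \ s) huv
        _ = v := union_sdiff_cancel_left (hdisj v hv)
    have hts : t \ s = ∅ ↔ s = t := by
      rw [sdiff_eq_empty_iff_subset]
      exact ⟨fun h => hst.antisymm h, fun h => h ▸ subset_rfl⟩
    rw [Icc_eq_image_powerset hst, sum_image hinj,
      sum_congr rfl fun u hu => by rw [card_union_of_disjoint (hdisj u hu), pow_add],
      ← mul_sum, sum_powerset_neg_one_pow_card]
    simp only [hts, mul_ite, mul_one, mul_zero]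
  · rw [Icc_eq_empty (by simpa using hst), sum_empty, if_neg (fun h => hst h.subset)]

theorem filter_disjoint_Icc_univ [Fintype α] (s E : Finset α) :
    {B ∈ Icc s univ | Disjoint B E} = Icc s Eᶜ := by
  ext B
  simp [subset_compl_iff_disjoint_right]

theorem sum_filter_not_disjoint_and_not_disjoint {R : Type*} [AddCommGroup R]
    (S : Finset (Finset α)) (g : Finset α → R) (C C' : Finset α) :
    ∑ B ∈ S with ¬Disjoint B C ∧ ¬Disjoint B C', g B
      = ∑ B ∈ S, g B - ∑ B ∈ S with Disjoint B C, g B - ∑ B ∈ S with Disjoint B C', g B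
        + ∑ B ∈ S with Disjoint B (C ∪ C'), g B := by
  simp only [sum_filter, ← sum_sub_distrib, ← sum_add_distrib, disjoint_union_right]
  refine sum_congr rfl fun B _ => ?_
  by_cases hC : Disjoint B C <;> by_cases hC' : Disjoint B C' <;> simp [hC, hC']

end Finset

theorem alt_sum_double_hit_general (n : ℕ) (A C C' : Finset (Fin n))
    (hA : A.Nonempty) :
    ∑ B ∈ Finset.univ.powerset.filter
        (fun B => Finset.univ \ A ⊆ B ∧ (B ∩ C).Nonempty ∧ (B ∩ C').Nonempty),
      (-1 : ℤ) ^ B.card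
    = (-1 : ℤ) ^ (n - A.card) *
        ((if C ∪ C' = A then 1 else 0) - (if C = A then 1 else 0)
          - (if C' = A then 1 else 0)) := by
  have hdomain : Finset.univ.powerset.filter
      (fun B => Finset.univ \ A ⊆ B ∧ (B ∩ C).Nonempty ∧ (B ∩ C').Nonempty)
      = {B ∈ Icc Aᶜ univ | ¬Disjoint B C ∧ ¬Disjoint B C'} := by
    ext B
    simp [compl_eq_univ_sdiff, not_disjoint_iff_nonempty_inter]
  rw [hdomain, sum_filter_not_disjoint_and_not_disjoint, filter_disjoint_Icc_univ,
    filter_disjoint_Icc_univ, filter_disjoint_Icc_univ, ← compl_empty]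
  simp only [sum_Icc_neg_one_pow_card_s13, compl_inj_iff, card_compl, Fintype.card_fin,
    hA.ne_empty.symm, if_false, eq_comm (a := A)]
  split_ifs <;> ring

/-- The inclusion–exclusion computation in the proof of Lemma 4.1(b):
`Σ_{N∖A ⊆ B ⊆ N, B∩C ≠ ∅, B∩C′ ≠ ∅} (−1)^{|B|}
= (−1)^{n−|A|} (1_{C∪C′=A} − 1_{C=A} − 1_{C′=A})`. -/
theorem alt_sum_double_hit (n : ℕ) (hn : 1 ≤ n) (A C C' : Finset (Fin n))
    (hA : A.Nonempty) (hC : C.Nonempty) (hC' : C'.Nonempty) :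
    ∑ B ∈ Finset.univ.powerset.filter
        (fun B => Finset.univ \ A ⊆ B ∧ (B ∩ C).Nonempty ∧ (B ∩ C').Nonempty),
      (-1 : ℤ) ^ B.card
    = (-1 : ℤ) ^ (n - A.card) *
        ((if C ∪ C' = A then 1 else 0) - (if C = A then 1 else 0)
          - (if C' = A then 1 else 0)) :=
  alt_sum_double_hit_general n A C C' hA
end
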